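/- Under the assumptions of the previous context, with the RIP-type bound replaced by (1 - (2k-1)μ)·‖Γ̂-Γ‖₂² ≤ ‖D(Γ̂-Γ)‖₂² for constants μ > 0 and k ≥ 1 with (2k-1)μ < 1: if k < (1/2)·(1 + (1/μ)·(1 - (2‖w‖₂ε/O)²)), then w^T Γ̂ + ω > 0. -/

import Mathlib

open Finset

noncomputable def dot {n : ℕ} (w v : Fin n → ℝ) : ℝ := ∑ i, w i * v i

noncomputable def l2 {n : ℕ} (v : Fin n → ℝ) : ℝ := Real.sqrt (∑ i, (v i) ^ 2)

noncomputable def linf {n : ℕ} (v : Fin n → ℝ) : ℝ := ⨆ i, |v i|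

noncomputable def l0 {n : ℕ} (v : Fin n → ℝ) : ℕ := (Finset.univ.filter (fun i => v i ≠ 0)).card

noncomputable def supp {n : ℕ} (v : Fin n → ℝ) : Finset (Fin n) := Finset.univ.filter (fun i => v i ≠ 0)

noncomputable def col {N M : ℕ} (D : Matrix (Fin N) (Fin M) ℝ) (j : Fin M) : Fin N → ℝ :=
  fun i => D i j

/-!
Put `Δ = Γhat - Γ` and `O = wᵀΓ + ω`. Both `DΓ` and `DΓhat` lie within `ε` of `Y`, so
`‖DΔ‖ ≤ 2ε`, and the coherence lower bound gives `(1 - (2k-1)μ)‖Δ‖² ≤ 4ε²`. The condition on `k`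
is exactly `(2‖w‖ε/O)² < 1 - (2k-1)μ`, which combined with the previous bound yields
`‖w‖‖Δ‖ < O`. By Cauchy–Schwarz, `wᵀΓhat + ω = O + wᵀΔ ≥ O - ‖w‖‖Δ‖ > 0`.
-/

section Euclidean

variable {n : ℕ}

lemma l2_eq_norm (v : Fin n → ℝ) : l2 v = ‖WithLp.toLp 2 v‖ := by
  simp [l2, EuclideanSpace.norm_eq, sq_abs]

lemma l2_nonneg (v : Fin n → ℝ) : 0 ≤ l2 v := Real.sqrt_nonneg _

lemma l2_sub_le (a b : Fin n → ℝ) : l2 (a - b) ≤ l2 a + l2 b := by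
  simpa only [l2_eq_norm, WithLp.toLp_sub] using norm_sub_le (WithLp.toLp 2 a) (WithLp.toLp 2 b)

lemma dot_eq_inner (w v : Fin n → ℝ) : dot w v = inner ℝ (WithLp.toLp 2 w) (WithLp.toLp 2 v) := by
  simp [dot, PiLp.inner_apply, mul_comm]

lemma abs_dot_le (w v : Fin n → ℝ) : |dot w v| ≤ l2 w * l2 v := by
  simpa only [dot_eq_inner, l2_eq_norm] using abs_real_inner_le_norm _ _

lemma dot_sub (w a b : Fin n → ℝ) : dot w (a - b) = dot w a - dot w b := by
  simp [dot, mul_sub, Finset.sum_sub_distrib]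

end Euclidean

lemma l2_mulVec_sub_le {N M : ℕ} (D : Matrix (Fin N) (Fin M) ℝ) (Y : Fin N → ℝ)
    (x y : Fin M → ℝ) : l2 (D.mulVec (x - y)) ≤ l2 (Y - D.mulVec y) + l2 (Y - D.mulVec x) := by
  have hsplit : D.mulVec (x - y) = (Y - D.mulVec y) - (Y - D.mulVec x) := by
    rw [Matrix.mulVec_sub]
    abel
  rw [hsplit]
  exact l2_sub_le _ _

lemma lt_coherence_bound_iff {μ k q : ℝ} (hμ : 0 < μ) :
    k < 1 / 2 * (1 + 1 / μ * (1 - q)) ↔ q < 1 - (2 * k - 1) * μ := by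
  rw [← mul_lt_mul_iff_of_pos_right hμ]
  have hexpand : 1 / 2 * (1 + 1 / μ * (1 - q)) * μ = μ / 2 + (1 - q) / 2 := by
    field_simp
  rw [hexpand]
  constructor <;> intro h <;> linarith

lemma mul_lt_of_mul_sq_le_of_div_sq_lt {A T e O c : ℝ} (hO : 0 < O)
    (hT : c * T ^ 2 ≤ e ^ 2) (he : (A * e / O) ^ 2 < c) : A * T < O := by
  have hc : 0 < c := (sq_nonneg _).trans_lt he
  have he' : (A * e) ^ 2 < c * O ^ 2 := by
    rwa [div_pow, div_lt_iff₀ (by positivity)] at he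
  have hAT : c * (A * T) ^ 2 < c * O ^ 2 :=
    calc c * (A * T) ^ 2 = A ^ 2 * (c * T ^ 2) := by ring
      _ ≤ A ^ 2 * e ^ 2 := by gcongr
      _ = (A * e) ^ 2 := by ring
      _ < c * O ^ 2 := he'
  exact (abs_lt_of_sq_lt_sq' (lt_of_mul_lt_mul_left hAT hc.le) hO.le).2

theorem stmt4_general {N M : ℕ} (D : Matrix (Fin N) (Fin M) ℝ) (Γ Γhat : Fin M → ℝ)
    (Y : Fin N → ℝ) (ε μ k : ℝ) (w : Fin M → ℝ) (ω : ℝ)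
    (hY1 : l2 (Y - D.mulVec Γ) ≤ ε) (hY2 : l2 (Y - D.mulVec Γhat) ≤ ε)
    (hμ : 0 < μ)
    (hrip : (1 - (2 * k - 1) * μ) * (l2 (Γhat - Γ)) ^ 2 ≤ (l2 (D.mulVec (Γhat - Γ))) ^ 2)
    (hO : dot w Γ + ω > 0)
    (hksmall : k < (1 / 2) * (1 + (1 / μ) * (1 - (2 * l2 w * ε / (dot w Γ + ω)) ^ 2))) :
    dot w Γhat + ω > 0 := by
  have hDΔ : l2 (D.mulVec (Γhat - Γ)) ≤ 2 * ε := by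
    linarith [l2_mulVec_sub_le D Y Γhat Γ]
  have hΔ : (1 - (2 * k - 1) * μ) * l2 (Γhat - Γ) ^ 2 ≤ (2 * ε) ^ 2 :=
    hrip.trans (pow_le_pow_left₀ (l2_nonneg _) hDΔ 2)
  have hmargin : (l2 w * (2 * ε) / (dot w Γ + ω)) ^ 2 < 1 - (2 * k - 1) * μ := by
    rw [← mul_assoc, mul_comm (l2 w)]
    exact (lt_coherence_bound_iff hμ).1 hksmall
  have hperturb : l2 w * l2 (Γhat - Γ) < dot w Γ + ω :=
    mul_lt_of_mul_sq_le_of_div_sq_lt hO hΔ hmargin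
  have hcs := abs_le.1 (abs_dot_le w (Γhat - Γ))
  rw [dot_sub] at hcs
  linarith [hcs.1]

theorem stmt4 {N M : ℕ} (D : Matrix (Fin N) (Fin M) ℝ) (Γ Γhat : Fin M → ℝ)
    (Y : Fin N → ℝ) (ε μ k : ℝ) (w : Fin M → ℝ) (ω : ℝ)
    (hY1 : l2 (Y - D.mulVec Γ) ≤ ε) (hY2 : l2 (Y - D.mulVec Γhat) ≤ ε)
    (hμ : 0 < μ) (hk1 : 1 ≤ k) (hkμ : (2 * k - 1) * μ < 1)
    (hrip : (1 - (2 * k - 1) * μ) * (l2 (Γhat - Γ)) ^ 2 ≤ (l2 (D.mulVec (Γhat - Γ))) ^ 2)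
    (hO : dot w Γ + ω > 0)
    (hksmall : k < (1 / 2) * (1 + (1 / μ) * (1 - (2 * l2 w * ε / (dot w Γ + ω)) ^ 2))) :
    dot w Γhat + ω > 0 :=
  stmt4_general D Γ Γhat Y ε μ k w ω hY1 hY2 hμ hrip hO hksmall
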